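/- For any edge-coloured graph G = (V,E,C) with |C| = k colours, the treewidth of the associated simple graph satisfies tw(Ḡ) ≤ tw(G) + C(k+3,2) − 1, where C(n,r) denotes the binomial coefficient. -/

import Mathlib

/-- An edge-coloured graph with `k` colours `c_1, …, c_k`: the colour `c_{i+1}`
is represented by the index `i : Fin k`.  Each arc is an unordered pair of
distinct endpoints together with a colour; loops are forbidden, and parallel
arcs must have distinct colours (automatic, since arcs form a set). -/
structure EdgeColouredGraph (k : ℕ) where
  V : Type
  [fintypeV : Fintype V]
  [decEqV : DecidableEq V]
  arcs : Finset (Sym2 V × Fin k)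
  loopless : ∀ a ∈ arcs, ¬ (a.1 : Sym2 V).IsDiag

attribute [instance] EdgeColouredGraph.fintypeV EdgeColouredGraph.decEqV

namespace EdgeColouredGraph

variable {k : ℕ}

/-- The type of arcs of an edge-coloured graph. -/
def Arc (G : EdgeColouredGraph k) : Type := {a : Sym2 G.V × Fin k // a ∈ G.arcs}

/-- Adjacency in an edge-coloured graph: `v` and `w` are the two (distinct)
endpoints of a common arc. -/
def Adj (G : EdgeColouredGraph k) (v w : G.V) : Prop :=
  v ≠ w ∧ ∃ c : Fin k, (s(v, w), c) ∈ G.arcs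

/-- Nodes of the associated simple graph `Ḡ`: a copy `v̄` of each node of `G`,
a node `ē` for each arc of `G`, and the clique nodes `κ_{i,j}`; for the colour
with index `i : Fin k` (i.e. the colour `c_{i+1}`) there are `(i+1)+2 = i+3`
clique nodes. -/
def AssocNode (G : EdgeColouredGraph k) : Type :=
  G.V ⊕ G.Arc ⊕ (Σ i : Fin k, Fin ((i : ℕ) + 3))

/-- The arcs of `Ḡ` (as an unoriented base relation): all arcs inside each
clique `κ_{i,1}, …, κ_{i,i+3}`, the arcs `{ē, v̄}` and `{ē, w̄}` for each arc
`e` of `G` with endpoints `v, w`, and the arc `{ē, κ_{c,1}}` where `c` is the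
colour of `e`. -/
def assocBaseRel (G : EdgeColouredGraph k) : G.AssocNode → G.AssocNode → Prop
  | Sum.inr (Sum.inr ⟨i, _⟩), Sum.inr (Sum.inr ⟨i', _⟩) => i = i'
  | Sum.inr (Sum.inl e), Sum.inl v => v ∈ e.val.1
  | Sum.inr (Sum.inl e), Sum.inr (Sum.inr ⟨i, j⟩) => e.val.2 = i ∧ j = 0
  | _, _ => False

/-- The simple graph `Ḡ` associated to the edge-coloured graph `G`. -/
def Assoc (G : EdgeColouredGraph k) : SimpleGraph G.AssocNode :=
  SimpleGraph.fromRel G.assocBaseRel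

end EdgeColouredGraph

/-- A tree decomposition of a graph, presented by its node type `V` and an
adjacency relation `Adj` (this covers simple graphs, multigraphs and
edge-coloured graphs alike): a finite tree together with finite bags
satisfying the usual covering and connectivity conditions. -/
structure TreeDecomp {V : Type} (Adj : V → V → Prop) where
  /-- index type of the tree nodes -/
  ι : Type
  [fin : Fintype ι]
  tree : SimpleGraph ι
  isTree : tree.IsTree
  bag : ι → Set V
  bag_finite : ∀ t, (bag t).Finite
  covers : ∀ v : V, ∃ t, v ∈ bag t
  covers_adj : ∀ v w : V, Adj v w → ∃ t, v ∈ bag t ∧ w ∈ bag t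
  subtree : ∀ v : V, (tree.induce {t | v ∈ bag t}).Connected

/-- The width of a tree decomposition: `max_τ |B_τ| − 1`. -/
noncomputable def TreeDecomp.width {V : Type} {Adj : V → V → Prop}
    (D : TreeDecomp Adj) : ℕ :=
  letI := D.fin
  (Finset.univ.sup fun t => (D.bag t).ncard) - 1

/-- The treewidth of a graph: the minimum width of a tree decomposition. -/
noncomputable def treewidth {V : Type} (Adj : V → V → Prop) : ℕ :=
  sInf {w | ∃ D : TreeDecomp Adj, D.width = w}

/-!
Take a tree decomposition of `G` of minimal width. Add all clique nodes `κ_{i,j}` (there are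
`∑_{i<k} (i + 3) = C(k+3,2) − 3` of them) to every bag, and for every arc `e` hang a new leaf
off a node whose bag contains both endpoints of `e`, with that bag plus `ē` as its bag. Every arc
of `Ḡ` then lies in a bag, the nodes whose bag contains a given node of `Ḡ` still form a
subtree, and bags grow by at most `C(k+3,2) − 2`.
-/

namespace SimpleGraph

variable {V W ι α : Type*}

theorem Reachable.of_adj_imp_eq_or_adj {G : SimpleGraph V} {H : SimpleGraph W} (g : V → W)
    (hg : ∀ ⦃x y⦄, G.Adj x y → g x = g y ∨ H.Adj (g x) (g y)) {x y : V}
    (h : G.Reachable x y) : H.Reachable (g x) (g y) := by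
  obtain ⟨p⟩ := h
  induction p with
  | nil => rfl
  | cons hxy _ ih =>
    rcases hg hxy with heq | hadj
    · exact heq ▸ ih
    · exact hadj.reachable.trans ih

theorem not_reachable_of_forall_not_adj {G : SimpleGraph V} {u v : V} (huv : u ≠ v)
    (hv : ∀ w, ¬G.Adj v w) : ¬G.Reachable u v := by
  rintro ⟨p⟩
  cases p.reverse with
  | nil => exact huv rfl
  | cons h _ => exact hv _ h

theorem induce_singleton_connected (G : SimpleGraph V) (v : V) : (G.induce {v}).Connected := by
  rw [induce_singleton_eq_top]
  exact connected_top

def attachLeaves (T : SimpleGraph ι) (f : α → ι) : SimpleGraph (ι ⊕ α) where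
  Adj
    | .inl s, .inl t => T.Adj s t
    | .inl s, .inr a => s = f a
    | .inr a, .inl s => s = f a
    | .inr _, .inr _ => False
  symm := ⟨by
    rintro (s | a) (t | b) h
    exacts [h.symm, h, h, h]⟩
  loopless := ⟨by
    rintro (s | a) h
    exacts [T.irrefl h, h]⟩

variable {T : SimpleGraph ι} {f : α → ι}

@[simp] theorem attachLeaves_adj_inl_inl {s t : ι} :
    (T.attachLeaves f).Adj (.inl s) (.inl t) ↔ T.Adj s t := .rfl

@[simp] theorem attachLeaves_adj_inl_inr {s : ι} {a : α} :
    (T.attachLeaves f).Adj (.inl s) (.inr a) ↔ s = f a := .rfl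

@[simp] theorem attachLeaves_adj_inr_inl {s : ι} {a : α} :
    (T.attachLeaves f).Adj (.inr a) (.inl s) ↔ s = f a := .rfl

@[simp] theorem attachLeaves_adj_inr_inr {a b : α} :
    ¬(T.attachLeaves f).Adj (.inr a) (.inr b) := id

def attachLeavesInl : T →g T.attachLeaves f where
  toFun := .inl
  map_rel' h := h

theorem Connected.attachLeaves (hT : T.Connected) : (T.attachLeaves f).Connected := by
  obtain ⟨t₀⟩ := hT.nonempty
  have hreach : ∀ x, (T.attachLeaves f).Reachable (.inl t₀) x := by
    rintro (t | a)
    · exact (hT.preconnected t₀ t).map attachLeavesInl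
    · exact (hT.preconnected t₀ (f a)).map attachLeavesInl |>.trans
        (attachLeaves_adj_inl_inr.mpr rfl).reachable
  exact (connected_iff_exists_forall_reachable _).mpr ⟨.inl t₀, hreach⟩

theorem isBridge_attachLeaves_leaf (a : α) :
    (T.attachLeaves f).IsBridge s(.inl (f a), .inr a) := by
  refine isBridge_iff.mpr (not_reachable_of_forall_not_adj Sum.inl_ne_inr ?_)
  rintro (t | b) h <;> simp_all [Sym2.eq_swap]

/-- Every edge stays a bridge: projecting the leaves onto their attachment points maps a walk
avoiding an edge of `T` to a walk in `T` avoiding it. -/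
theorem IsAcyclic.attachLeaves (hT : T.IsAcyclic) : (T.attachLeaves f).IsAcyclic := by
  rw [isAcyclic_iff_forall_adj_isBridge]
  rintro (s | a) (t | b) h
  · rw [isBridge_iff]
    refine fun hst ↦ isBridge_iff.mp (isAcyclic_iff_forall_adj_isBridge.mp hT h)
      (hst.of_adj_imp_eq_or_adj (Sum.elim id f) ?_)
    rintro (x | c) (y | d) hxy <;> simp_all
  · exact h ▸ isBridge_attachLeaves_leaf b
  · exact Sym2.eq_swap ▸ h ▸ isBridge_attachLeaves_leaf a
  · exact absurd h attachLeaves_adj_inr_inr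

theorem IsTree.attachLeaves (hT : T.IsTree) : (T.attachLeaves f).IsTree :=
  ⟨hT.connected.attachLeaves, hT.isAcyclic.attachLeaves⟩

theorem Connected.induce_univ {G : SimpleGraph V} (h : G.Connected) :
    (G.induce Set.univ).Connected :=
  G.induceUnivIso.connected_iff.mpr h

theorem Connected.induce_attachLeaves_preimage {A : Set ι} (hA : (T.induce A).Connected) :
    ((T.attachLeaves f).induce (Sum.elim id f ⁻¹' A)).Connected := by
  obtain ⟨t₀⟩ := hA.nonempty
  let g : T.induce A →g (T.attachLeaves f).induce (Sum.elim id f ⁻¹' A) :=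
    ⟨fun t ↦ ⟨.inl t, t.2⟩, fun h ↦ h⟩
  have hreach : ∀ t, ((T.attachLeaves f).induce _).Reachable (g t₀) (g t) :=
    fun t ↦ (hA.preconnected t₀ t).map g
  refine (connected_iff_exists_forall_reachable _).mpr ⟨g t₀, ?_⟩
  rintro ⟨t | a, hx⟩
  · exact hreach ⟨t, hx⟩
  · have hleaf : ((T.attachLeaves f).induce _).Adj (g ⟨f a, hx⟩) ⟨.inr a, hx⟩ := rfl
    exact (hreach ⟨f a, hx⟩).trans hleaf.reachable

end SimpleGraph

theorem Set.ncard_le_ncard_preimage_inl_add_ncard_preimage_inr {α β : Type*}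
    (s : Set (α ⊕ β)) :
    s.ncard ≤ (Sum.inl ⁻¹' s).ncard + (Sum.inr ⁻¹' s).ncard := by
  conv_lhs => rw [← Set.image_preimage_inl_union_image_preimage_inr s]
  refine (Set.ncard_union_le _ _).trans_eq ?_
  rw [Set.ncard_image_of_injective _ Sum.inl_injective,
    Set.ncard_image_of_injective _ Sum.inr_injective]

namespace TreeDecomp

variable {V : Type} {Adj : V → V → Prop}

attribute [local instance] TreeDecomp.fin

theorem ncard_bag_le_width_add_one (D : TreeDecomp Adj) (t : D.ι) :
    (D.bag t).ncard ≤ D.width + 1 := by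
  have := Finset.le_sup (f := fun t ↦ (D.bag t).ncard) (Finset.mem_univ t)
  unfold width
  omega

theorem width_le_of_forall_ncard_bag_le (D : TreeDecomp Adj) {n : ℕ}
    (h : ∀ t, (D.bag t).ncard ≤ n + 1) : D.width ≤ n := by
  have := Finset.sup_le (s := Finset.univ) fun t _ ↦ h t
  unfold width
  omega

noncomputable def singleBag [Finite V] (Adj : V → V → Prop) : TreeDecomp Adj where
  ι := Unit
  tree := ⊥
  isTree := .of_subsingleton
  bag _ := Set.univ
  bag_finite _ := Set.finite_univ
  covers _ := ⟨(), trivial⟩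
  covers_adj _ _ _ := ⟨(), trivial, trivial⟩
  subtree _ := (SimpleGraph.connected_iff_exists_forall_reachable _).mpr
    ⟨⟨(), trivial⟩, fun ⟨(), _⟩ ↦ .rfl⟩

end TreeDecomp

theorem treewidth_le_width {V : Type} {Adj : V → V → Prop} (D : TreeDecomp Adj) :
    treewidth Adj ≤ D.width :=
  Nat.sInf_le ⟨D, rfl⟩

theorem exists_width_eq_treewidth {V : Type} [Finite V] (Adj : V → V → Prop) :
    ∃ D : TreeDecomp Adj, D.width = treewidth Adj :=
  Nat.sInf_mem (s := {w | ∃ D : TreeDecomp Adj, D.width = w})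
    ⟨_, TreeDecomp.singleBag Adj, rfl⟩

namespace EdgeColouredGraph

theorem card_cliqueNodes (k : ℕ) :
    Nat.card (Σ i : Fin k, Fin ((i : ℕ) + 3)) + 3 = (k + 3).choose 2 := by
  rw [Nat.card_eq_fintype_card, Fintype.card_sigma]
  simp only [Fintype.card_fin]
  rw [Fin.sum_univ_eq_sum_range (· + 3)]
  induction k with
  | zero => rfl
  | succ n ih =>
    have hpascal : (n + 3 + 1).choose 2 = n + 3 + (n + 3).choose 2 := by
      rw [Nat.choose_succ_succ', Nat.choose_one_right]
    rw [Finset.sum_range_succ, show n + 1 + 3 = n + 3 + 1 by omega, hpascal]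
    omega

variable {k : ℕ} {G : EdgeColouredGraph k}

instance : Fintype G.Arc := inferInstanceAs (Fintype {a // a ∈ G.arcs})

instance : Fintype G.AssocNode := inferInstanceAs (Fintype (G.V ⊕ G.Arc ⊕ _))

theorem adj_of_mem_arcs {v w : G.V} {c : Fin k} (h : (s(v, w), c) ∈ G.arcs) : G.Adj v w :=
  ⟨fun hvw ↦ G.loopless _ h (by simp [hvw]), c, h⟩

theorem exists_bag_superset_arc (D : TreeDecomp G.Adj) (e : G.Arc) :
    ∃ t, ∀ v ∈ e.1.1, v ∈ D.bag t := by
  obtain ⟨⟨s, c⟩, he⟩ := e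
  induction s using Sym2.ind with
  | _ v w =>
    obtain ⟨t, hv, hw⟩ := D.covers_adj v w (adj_of_mem_arcs he)
    refine ⟨t, fun x hx ↦ ?_⟩
    rcases Sym2.mem_iff.mp hx with rfl | rfl <;> assumption

noncomputable def homeNode (D : TreeDecomp G.Adj) (e : G.Arc) : D.ι :=
  (exists_bag_superset_arc D e).choose

theorem endpoint_mem_bag_homeNode (D : TreeDecomp G.Adj) (e : G.Arc) :
    ∀ v ∈ e.1.1, v ∈ D.bag (homeNode D e) :=
  (exists_bag_superset_arc D e).choose_spec

def assocBag (D : TreeDecomp G.Adj) (x : D.ι ⊕ G.Arc) : Set G.AssocNode :=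
  {y | match y with
    | .inl v => v ∈ D.bag (Sum.elim id (homeNode D) x)
    | .inr (.inl e) => x = .inr e
    | .inr (.inr _) => True}

variable (D : TreeDecomp G.Adj) (x : D.ι ⊕ G.Arc)

theorem exists_assocBag_of_assocBaseRel {y z : G.AssocNode} (h : G.assocBaseRel y z) :
    ∃ t, y ∈ assocBag D t ∧ z ∈ assocBag D t := by
  obtain ⟨t₀⟩ := D.isTree.connected.nonempty
  rcases y with v | e | p <;> rcases z with w | f | q <;> simp only [assocBaseRel] at h
  · exact ⟨.inr e, rfl, endpoint_mem_bag_homeNode D e w h⟩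
  · exact ⟨.inr e, rfl, trivial⟩
  · exact ⟨.inl t₀, trivial, trivial⟩

theorem ncard_assocBag_le :
    (assocBag D x).ncard ≤ (D.bag (Sum.elim id (homeNode D) x)).ncard + 1 +
      Nat.card (Σ i : Fin k, Fin ((i : ℕ) + 3)) := by
  have hArc : (Sum.inl ⁻¹' (Sum.inr ⁻¹' assocBag D x)).ncard ≤ 1 :=
    Set.ncard_le_one_iff_subsingleton.mpr fun _ ha _ hb ↦ Sum.inr_injective (ha.symm.trans hb)
  calc (assocBag D x).ncard
      ≤ (D.bag _).ncard + (Sum.inr ⁻¹' assocBag D x).ncard :=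
        Set.ncard_le_ncard_preimage_inl_add_ncard_preimage_inr _
    _ ≤ _ := by
        have := Set.ncard_le_ncard_preimage_inl_add_ncard_preimage_inr (Sum.inr ⁻¹' assocBag D x)
        have := Set.ncard_le_card (Sum.inr ⁻¹' (Sum.inr ⁻¹' assocBag D x))
        omega

noncomputable def assocTreeDecomp (D : TreeDecomp G.Adj) : TreeDecomp G.Assoc.Adj where
  ι := D.ι ⊕ G.Arc
  fin := letI := D.fin; inferInstance
  tree := D.tree.attachLeaves (homeNode D)
  isTree := D.isTree.attachLeaves
  bag := assocBag D
  bag_finite _ := Set.toFinite _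
  covers
    | .inl v => let ⟨t, ht⟩ := D.covers v; ⟨.inl t, ht⟩
    | .inr (.inl e) => ⟨.inr e, rfl⟩
    | .inr (.inr _) => ⟨.inl D.isTree.connected.nonempty.some, trivial⟩
  covers_adj _ _ h := h.2.elim (exists_assocBag_of_assocBaseRel D)
    fun h ↦ (exists_assocBag_of_assocBaseRel D h).imp fun _ ↦ And.symm
  subtree
    | .inl v => (D.subtree v).induce_attachLeaves_preimage
    | .inr (.inl e) => SimpleGraph.induce_singleton_connected _ (Sum.inr e)
    | .inr (.inr _) => D.isTree.attachLeaves.connected.induce_univ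

theorem width_assocTreeDecomp_le (D : TreeDecomp G.Adj) :
    (assocTreeDecomp D).width ≤ D.width + (k + 3).choose 2 - 1 := by
  refine TreeDecomp.width_le_of_forall_ncard_bag_le _ fun x ↦ ?_
  change (assocBag D x).ncard ≤ _
  have hbag := ncard_assocBag_le D x
  have hD := D.ncard_bag_le_width_add_one (Sum.elim id (homeNode D) x)
  have hK := card_cliqueNodes k
  omega

end EdgeColouredGraph

open EdgeColouredGraph in
/-- For any edge-coloured graph `G` with `k` colours, the
treewidth of the associated simple graph satisfies
`tw(Ḡ) ≤ tw(G) + C(k+3, 2) − 1`. -/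
theorem assoc_treewidth_le {k : ℕ} (G : EdgeColouredGraph k) :
    treewidth G.Assoc.Adj ≤ treewidth G.Adj + Nat.choose (k + 3) 2 - 1 := by
  obtain ⟨D, hD⟩ := exists_width_eq_treewidth G.Adj
  rw [← hD]
  exact (treewidth_le_width _).trans (width_assocTreeDecomp_le D)
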